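/- arXiv:2404.07326 — 2 statements merged into one kernel-verified Lean document; each statement's English description precedes it below -/
import Mathlib

section
/- If a continuous potential φ : X₊ → ℝ satisfies the Good Future condition ∑_{k=1}^∞ δ_k(φ) < ∞, where δ_k(φ) is the oscillation of φ at site k, then φ satisfies the extensibility condition: for all a₀, b₀ ∈ E, the sequence F_n^{a₀,b₀}(x) = ∑_{i=0}^n (φ(x_{-i}^{-1} b₀ x₁^∞) − φ(x_{-i}^{-1} a₀ x₁^∞)) converges uniformly on X = E^ℤ as n → ∞. -/
open Function Filter

/-- The one-sided configuration `x_{-i}^{-1} c x_1^∞` obtained from a two-sided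
configuration `x : ℤ → E`: position `i` carries the symbol `c`, and position
`m ≠ i` carries `x (m - i)`. -/
def concatAt {E : Type*} (x : ℤ → E) (i : ℕ) (c : E) : ℕ → E :=
  fun m => if m = i then c else x ((m : ℤ) - (i : ℤ))

/-- if a continuous potential `φ : E^{ℤ₊} → ℝ` satisfies the
Good Future condition `∑ δ_k(φ) < ∞` (site oscillations dominated by a summable
sequence `δ`), then `φ` satisfies the extensibility condition: for all
`a b ∈ E`, the partial sums `F_n^{a,b}(x) = ∑_{i=0}^n (φ(x_{-i}^{-1} b x_1^∞)
− φ(x_{-i}^{-1} a x_1^∞))` converge uniformly on `E^ℤ`. -/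
theorem goodFuture_implies_extensibility
    {E : Type*} [Fintype E] [Nonempty E] [TopologicalSpace E] [DiscreteTopology E]
    (φ : (ℕ → E) → ℝ) (hφ : Continuous φ)
    (δ : ℕ → ℝ) (hδ : Summable δ)
    (hosc : ∀ (k : ℕ) (x : ℕ → E) (c d : E),
      |φ (Function.update x k c) - φ (Function.update x k d)| ≤ δ k)
    (a b : E) :
    ∃ F : (ℤ → E) → ℝ,
      TendstoUniformly
        (fun n (x : ℤ → E) =>
          ∑ i ∈ Finset.range (n + 1),
            (φ (concatAt x i b) - φ (concatAt x i a)))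
        F atTop := by
  have key : ∀ (i : ℕ) (x : ℤ → E),
      ‖φ (concatAt x i b) - φ (concatAt x i a)‖ ≤ δ i := by
    intro i x
    have h1 : concatAt x i b = Function.update (concatAt x i a) i b := by
      funext m; by_cases h : m = i <;> simp [concatAt, Function.update, h]
    have h2 : concatAt x i a = Function.update (concatAt x i a) i a := by
      funext m; by_cases h : m = i <;> simp [concatAt, Function.update, h]
    rw [Real.norm_eq_abs, h1]
    nth_rewrite 2 [h2]
    exact hosc i (concatAt x i a) b a
  have h := tendstoUniformly_tsum_nat (f := fun i x => φ (concatAt x i b) - φ (concatAt x i a))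
      hδ (fun n x => key n x)
  refine ⟨fun x => ∑' i, (φ (concatAt x i b) - φ (concatAt x i a)), ?_⟩
  rw [Metric.tendstoUniformly_iff] at h ⊢
  intro ε hε
  filter_upwards [(tendsto_add_atTop_nat 1).eventually (h ε hε)] with n hn
  exact hn
end

section
/- Let μ be a probability measure and W a measurable function with ∫ |W|^m dμ ≤ m v^m Γ(m/2) for all m ∈ ℕ, for some constant v > 0, and ∫ W dμ = 0. Then ∫ (e^W − 1)² dμ ≤ 4v + 3e^{v²} + 2e^{4v²} − 5. -/
/-!
Pointwise `(e^w - 1)² ≤ e^{2|w|} - 1 - 2w`, so, as `∫ W = 0`, it suffices to bound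
`∫ e^{2|W|} = ∑ₘ 2^m ∫ |W|^m / m!`. After inserting the moment bound `m v^m Γ(m/2)`, the value of
`Γ` at half-integers makes the odd terms exactly `2√π v (v²)^k / k!`, while `(2k)! ≥ 2 (k!)²` bounds
the even terms by `(4v²)^k / k!`. Hence `∫ e^{2|W|} ≤ e^{4v²} + 2√π v e^{v²}`, which lies below the
claimed bound.
-/

open MeasureTheory Real
open scoped Nat

theorem Real.sq_exp_sub_one_le (w : ℝ) : (exp w - 1) ^ 2 ≤ exp (2 * |w|) - 1 - 2 * w := by
  have h2w : exp (2 * w) ≤ exp (2 * |w|) := exp_le_exp.2 (by linarith [le_abs_self w])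
  have hsq : (exp w - 1) ^ 2 = exp (2 * w) - 2 * exp w + 1 := by
    rw [two_mul w, exp_add]; ring
  linarith [add_one_le_exp w]

theorem Real.exp_four_mul_sq_add_le {v : ℝ} (hv : 0 ≤ v) :
    exp (4 * v ^ 2) + 2 * √π * v * exp (v ^ 2) - 1
      ≤ 4 * v + 3 * exp (v ^ 2) + 2 * exp (4 * v ^ 2) - 5 := by
  set x := exp (v ^ 2)
  have hx : 1 + v ^ 2 ≤ x := by linarith [add_one_le_exp (v ^ 2)]
  have hx4 : exp (4 * v ^ 2) = x ^ 4 := by rw [← exp_nat_mul]; norm_num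
  have hsqrt : √π ≤ 2 := by nlinarith [sq_sqrt pi_pos.le, sqrt_nonneg π, pi_lt_four]
  have hvx : 2 * √π * v * x ≤ 4 * v * x := by gcongr; linarith
  -- `4v + 3x + x⁴ - 4 - 4vx = (x - 1)(x³ + x² + x + 4 - 4v)`, and `x + 4 - 4v ≥ (v - 2)² + 1`
  have hfactor : 0 ≤ (x - 1) * (x ^ 3 + x ^ 2 + x + 4 - 4 * v) := by
    apply mul_nonneg <;> nlinarith [sq_nonneg (v - 2)]
  rw [hx4]
  nlinarith

theorem Nat.two_mul_factorial_mul_factorial_le {k : ℕ} (hk : k ≠ 0) :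
    2 * (k ! * k !) ≤ (2 * k)! := by
  have h := Nat.choose_mul_factorial_mul_factorial (show k ≤ 2 * k by omega)
  rw [show 2 * k - k = k by omega, ← Nat.centralBinom_eq_two_mul_choose, mul_assoc] at h
  rw [← h]
  exact Nat.mul_le_mul_right _ (Nat.two_le_centralBinom k (Nat.pos_of_ne_zero hk))

noncomputable def subGaussianMomentBound (v : ℝ) (m : ℕ) : ℝ := m * v ^ m * Gamma (m / 2)

theorem two_pow_div_factorial_mul_subGaussianMomentBound_two_mul_le (v : ℝ) {k : ℕ}
    (hk : k ≠ 0) :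
    2 ^ (2 * k) / ((2 * k)! : ℝ) * subGaussianMomentBound v (2 * k) ≤ (4 * v ^ 2) ^ k / k ! := by
  have hΓ : ((2 * k : ℕ) : ℝ) * Gamma (((2 * k : ℕ) : ℝ) / 2) = 2 * (k ! : ℝ) := by
    obtain ⟨j, rfl⟩ := Nat.exists_eq_succ_of_ne_zero hk
    rw [show ((2 * (j + 1) : ℕ) : ℝ) / 2 = j + 1 by push_cast; ring, Gamma_nat_eq_factorial,
      Nat.factorial_succ]
    push_cast; ring
  have hfact : (2 * (k ! * k !) : ℝ) ≤ (2 * k)! := by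
    exact_mod_cast Nat.two_mul_factorial_mul_factorial_le hk
  rw [subGaussianMomentBound, mul_right_comm _ (v ^ _), hΓ, div_mul_eq_mul_div,
    div_le_div_iff₀ (by positivity) (by positivity)]
  calc (2 : ℝ) ^ (2 * k) * (2 * k ! * v ^ (2 * k)) * k !
      = (4 * v ^ 2) ^ k * (2 * (k ! * k !)) := by rw [mul_pow, pow_mul, pow_mul]; ring
    _ ≤ (4 * v ^ 2) ^ k * (2 * k)! := by gcongr

theorem two_pow_div_factorial_mul_subGaussianMomentBound_two_mul_add_one (v : ℝ) (k : ℕ) :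
    2 ^ (2 * k + 1) / ((2 * k + 1)! : ℝ) * subGaussianMomentBound v (2 * k + 1)
      = 2 * √π * v * ((v ^ 2) ^ k / k !) := by
  have hΓ : ((2 * k + 1 : ℕ) : ℝ) * Gamma (((2 * k + 1 : ℕ) : ℝ) / 2)
      = (2 * k + 1 : ℕ)‼ * √π / 2 ^ k := by
    rw [show ((2 * k + 1 : ℕ) : ℝ) / 2 = k + 1 / 2 by push_cast; ring,
      show ((2 * k + 1 : ℕ) : ℝ) = 2 * (k + 1 / 2) by push_cast; ring, mul_assoc,
      ← Gamma_add_one (by positivity), add_right_comm, Gamma_nat_add_one_add_half, pow_succ]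
    field_simp
  have hfact : ((2 * k + 1)! : ℝ) = (2 * k + 1 : ℕ)‼ * (2 ^ k * k !) := by
    rw [Nat.factorial_eq_mul_doubleFactorial, Nat.doubleFactorial_two_mul]; push_cast; ring
  rw [subGaussianMomentBound, mul_right_comm _ (v ^ _), hΓ, hfact]
  field_simp
  ring

theorem hasSum_pow_div_factorial_exp (y : ℝ) : HasSum (fun m : ℕ => y ^ m / m !) (exp y) :=
  Real.exp_eq_exp_ℝ ▸ NormedSpace.expSeries_div_hasSum_exp y

theorem summable_and_tsum_le_of_even_odd {c a b : ℕ → ℝ} {A B : ℝ} (hc : ∀ m, 0 ≤ c m)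
    (ha : HasSum a A) (hb : HasSum b B) (hca : ∀ k, c (2 * k) ≤ a k)
    (hcb : ∀ k, c (2 * k + 1) ≤ b k) : Summable c ∧ ∑' m, c m ≤ A + B := by
  have he : Summable fun k => c (2 * k) := .of_nonneg_of_le (fun _ => hc _) hca ha.summable
  have ho : Summable fun k => c (2 * k + 1) := .of_nonneg_of_le (fun _ => hc _) hcb hb.summable
  have h := he.hasSum.even_add_odd ho.hasSum
  exact ⟨h.summable,
    h.tsum_eq ▸ add_le_add (hasSum_le hca he.hasSum ha) (hasSum_le hcb ho.hasSum hb)⟩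

section ExpMoments

variable {X : Type*} [MeasurableSpace X] {μ : Measure X} {Y : X → ℝ}

theorem integrable_exp_of_summable_integral_pow_div_factorial (hY : 0 ≤ Y)
    (hint : ∀ m, Integrable (fun x => Y x ^ m) μ)
    (hsum : Summable fun m : ℕ => ∫ x, Y x ^ m / m ! ∂μ) :
    Integrable (fun x => exp (Y x)) μ := by
  have hF_int (m : ℕ) : Integrable (fun x => Y x ^ m / m !) μ := (hint m).div_const _
  have hF_nonneg (m : ℕ) (x : X) : 0 ≤ Y x ^ m / m ! := by have : 0 ≤ Y x := hY x; positivity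
  refine ⟨continuous_exp.comp_aestronglyMeasurable
    (by simpa using (hint 1).aestronglyMeasurable), ?_⟩
  rw [hasFiniteIntegral_iff_ofReal (ae_of_all _ fun x => (exp_pos _).le)]
  calc ∫⁻ x, ENNReal.ofReal (exp (Y x)) ∂μ
      = ∫⁻ x, ∑' m : ℕ, ENNReal.ofReal (Y x ^ m / m !) ∂μ := by
        refine lintegral_congr fun x => ?_
        rw [← (hasSum_pow_div_factorial_exp (Y x)).tsum_eq,
          ENNReal.ofReal_tsum_of_nonneg (hF_nonneg · x) (hasSum_pow_div_factorial_exp _).summable]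
    _ = ∑' m : ℕ, ∫⁻ x, ENNReal.ofReal (Y x ^ m / m !) ∂μ :=
        lintegral_tsum fun m => (hF_int m).aemeasurable.ennreal_ofReal
    _ = ENNReal.ofReal (∑' m : ℕ, ∫ x, Y x ^ m / m ! ∂μ) := by
        rw [ENNReal.ofReal_tsum_of_nonneg (fun m => integral_nonneg (hF_nonneg m)) hsum]
        exact tsum_congr fun m =>
          (ofReal_integral_eq_lintegral_ofReal (hF_int m) (ae_of_all _ (hF_nonneg m))).symm
    _ < ⊤ := ENNReal.ofReal_lt_top

theorem hasSum_integral_pow_div_factorial (hY : 0 ≤ Y)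
    (hint : ∀ m, Integrable (fun x => Y x ^ m) μ)
    (hsum : Summable fun m : ℕ => ∫ x, Y x ^ m / m ! ∂μ) :
    HasSum (fun m : ℕ => ∫ x, Y x ^ m / m ! ∂μ) (∫ x, exp (Y x) ∂μ) := by
  have h := hasSum_integral_of_summable_integral_norm (fun m => (hint m).div_const (m ! : ℝ))
    (by simpa only [norm_div, norm_pow, Real.norm_of_nonneg (hY _), Real.norm_natCast] using hsum)
  simpa only [fun x => (hasSum_pow_div_factorial_exp (Y x)).tsum_eq] using h

end ExpMoments

section ExpTwoAbs

variable {X : Type*} [MeasurableSpace X] {μ : Measure X} [IsProbabilityMeasure μ] {W : X → ℝ}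
  {v : ℝ}

theorem integrable_exp_two_mul_abs_and_integral_le
    (hintabs : ∀ m : ℕ, Integrable (fun x => |W x| ^ m) μ)
    (hmom : ∀ m : ℕ, 1 ≤ m → ∫ x, |W x| ^ m ∂μ ≤ subGaussianMomentBound v m) :
    Integrable (fun x => exp (2 * |W x|)) μ ∧
      ∫ x, exp (2 * |W x|) ∂μ ≤ exp (4 * v ^ 2) + 2 * √π * v * exp (v ^ 2) := by
  set c : ℕ → ℝ := fun m => ∫ x, (2 * |W x|) ^ m / m ! ∂μ
  have hY : 0 ≤ fun x => 2 * |W x| := fun x => by positivity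
  have hint (m : ℕ) : Integrable (fun x => (2 * |W x|) ^ m) μ := by
    simpa only [mul_pow] using (hintabs m).const_mul (2 ^ m)
  have hc_le (m : ℕ) (hm : 1 ≤ m) : c m ≤ 2 ^ m / m ! * subGaussianMomentBound v m := by
    simp only [c, mul_pow, integral_const_mul, mul_div_right_comm]
    exact mul_le_mul_of_nonneg_left (hmom m hm) (by positivity)
  have hc_even (k : ℕ) : c (2 * k) ≤ (4 * v ^ 2) ^ k / k ! := by
    rcases eq_or_ne k 0 with rfl | hk
    · simp [c]
    · exact (hc_le _ (by omega)).trans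
        (two_pow_div_factorial_mul_subGaussianMomentBound_two_mul_le v hk)
  have hc_odd (k : ℕ) : c (2 * k + 1) ≤ 2 * √π * v * ((v ^ 2) ^ k / k !) :=
    (hc_le _ (by omega)).trans_eq
      (two_pow_div_factorial_mul_subGaussianMomentBound_two_mul_add_one v k)
  obtain ⟨hsum, hsum_le⟩ := summable_and_tsum_le_of_even_odd (c := c)
    (fun m => integral_nonneg fun x => by positivity) (hasSum_pow_div_factorial_exp _)
    ((hasSum_pow_div_factorial_exp _).mul_left _) hc_even hc_odd
  refine ⟨integrable_exp_of_summable_integral_pow_div_factorial hY hint hsum, ?_⟩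
  rw [← (hasSum_integral_pow_div_factorial hY hint hsum).tsum_eq]
  exact hsum_le

end ExpTwoAbs

theorem moment_bound_exp_square_general
    {X : Type*} [MeasurableSpace X]
    (μ : Measure X) [IsProbabilityMeasure μ]
    (W : X → ℝ) (v : ℝ) (hv : 0 < v)
    (hint : Integrable W μ)
    (hintabs : ∀ m : ℕ, Integrable (fun x => |W x| ^ m) μ)
    (hmom : ∀ m : ℕ, 1 ≤ m →
      ∫ x, |W x| ^ m ∂μ ≤ (m : ℝ) * v ^ m * Real.Gamma ((m : ℝ) / 2))
    (hmean : ∫ x, W x ∂μ = 0) :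
    ∫ x, (Real.exp (W x) - 1) ^ 2 ∂μ
      ≤ 4 * v + 3 * Real.exp (v ^ 2) + 2 * Real.exp (4 * v ^ 2) - 5 := by
  obtain ⟨hexp, hexp_le⟩ := integrable_exp_two_mul_abs_and_integral_le hintabs hmom
  have hexp_sub : Integrable (fun x => exp (2 * |W x|) - 1) μ := hexp.sub (integrable_const 1)
  calc ∫ x, (exp (W x) - 1) ^ 2 ∂μ ≤ ∫ x, (exp (2 * |W x|) - 1 - 2 * W x) ∂μ :=
        integral_mono_of_nonneg (ae_of_all _ fun x => sq_nonneg _)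
          (hexp_sub.sub (hint.const_mul 2)) (ae_of_all _ fun x => sq_exp_sub_one_le (W x))
    _ = ∫ x, exp (2 * |W x|) ∂μ - 1 := by
        rw [integral_sub hexp_sub (hint.const_mul 2), integral_sub hexp (integrable_const 1),
          integral_const_mul, hmean]
        simp
    _ ≤ exp (4 * v ^ 2) + 2 * √π * v * exp (v ^ 2) - 1 := by linarith
    _ ≤ 4 * v + 3 * exp (v ^ 2) + 2 * exp (4 * v ^ 2) - 5 := exp_four_mul_sq_add_le hv.le

/-- if `∫ |W|^m dμ ≤ m v^m Γ(m/2)` for all `m ∈ ℕ` and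
`∫ W dμ = 0`, then `∫ (e^W − 1)² dμ ≤ 4v + 3e^{v²} + 2e^{4v²} − 5`. -/
theorem moment_bound_exp_square
    {X : Type*} [MeasurableSpace X]
    (μ : Measure X) [IsProbabilityMeasure μ]
    (W : X → ℝ) (hWm : Measurable W) (v : ℝ) (hv : 0 < v)
    (hint : Integrable W μ)
    (hintexp : Integrable (fun x => Real.exp (W x)) μ)
    (hintexp2 : Integrable (fun x => Real.exp (2 * W x)) μ)
    (hintabs : ∀ m : ℕ, Integrable (fun x => |W x| ^ m) μ)
    (hmom : ∀ m : ℕ, 1 ≤ m →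
      ∫ x, |W x| ^ m ∂μ ≤ (m : ℝ) * v ^ m * Real.Gamma ((m : ℝ) / 2))
    (hmean : ∫ x, W x ∂μ = 0) :
    ∫ x, (Real.exp (W x) - 1) ^ 2 ∂μ
      ≤ 4 * v + 3 * Real.exp (v ^ 2) + 2 * Real.exp (4 * v ^ 2) - 5 :=
  moment_bound_exp_square_general μ W v hv hint hintabs hmom hmean
end
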